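/- Let Q ∈ Gr_{m,n} and ξ ∈ T_Q. Set P := exp([ξ,Q]) · Q · exp(−[ξ,Q]). Then [[ξ,Q], P] = exp([ξ,Q]) · ξ · exp(−[ξ,Q]); that is, the matrix ad_{[ξ,Q]}(P) appearing in the Riemannian gradient of the squared distance function equals the parallel transport of ξ from Q to P. -/

import Mathlib

open Matrix

/-- The Grassmannian `Gr_{m,n}`: Hermitian rank-`m` projection matrices in `ℂ^{n×n}`. -/
def Grassmannian (m n : ℕ) : Set (Matrix (Fin n) (Fin n) ℂ) :=
  {P | Pᴴ = P ∧ P * P = P ∧ Matrix.trace P = (m : ℂ)}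

/-- The tangent space of the Grassmannian at `Q`. -/
def tangentSpace (n : ℕ) (Q : Matrix (Fin n) (Fin n) ℂ) : Set (Matrix (Fin n) (Fin n) ℂ) :=
  {H | ∃ Ω : Matrix (Fin n) (Fin n) ℂ, Ωᴴ = -Ω ∧ H = Q * Ω - Ω * Q}

/-- The matrix commutator `[A,B] = AB − BA`. -/
noncomputable def matComm {n : ℕ} (A B : Matrix (Fin n) (Fin n) ℂ) :
    Matrix (Fin n) (Fin n) ℂ :=
  A * B - B * A

/-- Let `Q ∈ Gr_{m,n}` and `ξ ∈ T_Q`, and set `P = exp([ξ,Q]) Q exp(−[ξ,Q])`. Then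
`[[ξ,Q], P] = exp([ξ,Q]) ξ exp(−[ξ,Q])`: the matrix `ad_{[ξ,Q]}(P)` appearing in the
Riemannian gradient of the squared distance equals the parallel transport of `ξ`
from `Q` to `P`. -/
theorem gradient_term_eq_transported_tangent (m n : ℕ) (hm : 0 < m) (hmn : m < n)
    (Q ξ : Matrix (Fin n) (Fin n) ℂ) (hQ : Q ∈ Grassmannian m n)
    (hξ : ξ ∈ tangentSpace n Q) :
    matComm (matComm ξ Q)
        (NormedSpace.exp (matComm ξ Q) * Q * NormedSpace.exp (-(matComm ξ Q))) =
      NormedSpace.exp (matComm ξ Q) * ξ * NormedSpace.exp (-(matComm ξ Q)) := by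
  obtain ⟨hH, hP2, htr⟩ := hQ
  obtain ⟨Ω, hΩ, rfl⟩ := hξ
  set X : Matrix (Fin n) (Fin n) ℂ := Q * Ω - Ω * Q with hX
  set A : Matrix (Fin n) (Fin n) ℂ := matComm X Q with hA
  -- key algebraic identity: [A, Q] = X
  have key : A * Q - Q * A = X := by
    have h1 : ∀ B : Matrix (Fin n) (Fin n) ℂ, B * Q * Q = B * Q := fun B => by
      rw [mul_assoc, hP2]
    simp only [hA, matComm, hX, sub_mul, mul_sub, ← mul_assoc, hP2, h1]
    noncomm_ring
  have cA : Commute A (NormedSpace.exp A) := (Commute.refl A).exp_right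
  have cA' : Commute A (NormedSpace.exp (-A)) := ((Commute.refl A).neg_right).exp_right
  calc matComm A (NormedSpace.exp A * Q * NormedSpace.exp (-A))
      = A * (NormedSpace.exp A * Q * NormedSpace.exp (-A))
        - (NormedSpace.exp A * Q * NormedSpace.exp (-A)) * A := rfl
    _ = NormedSpace.exp A * (A * Q) * NormedSpace.exp (-A)
        - NormedSpace.exp A * (Q * A) * NormedSpace.exp (-A) := by
        rw [show A * (NormedSpace.exp A * Q * NormedSpace.exp (-A))
            = A * NormedSpace.exp A * Q * NormedSpace.exp (-A) by noncomm_ring,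
          cA.eq, mul_assoc (NormedSpace.exp A * Q) (NormedSpace.exp (-A)) A,
          ← cA'.eq]
        noncomm_ring
    _ = NormedSpace.exp A * (A * Q - Q * A) * NormedSpace.exp (-A) := by
        noncomm_ring
    _ = NormedSpace.exp A * X * NormedSpace.exp (-A) := by rw [key]
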